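/- Let (A,V,χ,F,ν) be a crossed product system with preunit and assume F is a cocycle satisfying the twisted module condition. Then E := A×V, endowed with the multiplication μ_E obtained by restricting and corestricting μ_𝓔 to A×V, is a unital associative k-algebra with unit 1_E := ν(1); moreover μ_E is left and right A-linear: μ_E((a·x)⊗y) = a·μ_E(x⊗y) and μ_E(x⊗(y·a)) = μ_E(x⊗y)·a for all a ∈ A and x,y ∈ E. -/
import Mathlib


open TensorProduct

noncomputable section

namespace WeakCrossedProduct

variable {k : Type*} [Field k]
variable {A : Type*} [Ring A] [Algebra k A]
variable {V : Type*} [AddCommGroup V] [Module k V]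

/-- The map `A ⊗ₖ (A ⊗ₖ V) → A ⊗ₖ V`, `a ⊗ x ↦ a • x`, i.e. `μ_A ⊗ id_V`. -/
def actMap : A ⊗[k] (A ⊗[k] V) →ₗ[k] A ⊗[k] V :=
  TensorProduct.lift (LinearMap.mk₂ k (fun (a : A) (x : A ⊗[k] V) => a • x)
    (fun a b x => add_smul a b x)
    (fun c a x => smul_assoc c a x)
    (fun a x y => smul_add a x y)
    (fun c a x => smul_comm a c x))

/-- Given `g : V → A ⊗ V`, the map `A ⊗ V → A ⊗ V`, `a ⊗ u ↦ a • g u`. -/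
def smulMap (g : V →ₗ[k] A ⊗[k] V) : A ⊗[k] V →ₗ[k] A ⊗[k] V :=
  TensorProduct.lift (LinearMap.mk₂ k (fun (a : A) (u : V) => a • g u)
    (fun a b u => add_smul a b (g u))
    (fun c a u => smul_assoc c a (g u))
    (fun a u u' => show a • g (u + u') = a • g u + a • g u' by
      rw [map_add, smul_add])
    (fun c a u => show a • g (c • u) = c • (a • g u) by
      rw [map_smul]; exact smul_comm a c (g u)))

/-- The right action of `a' ∈ A` on `A ⊗ V`: `(a ⊗ v) · a' := a • χ (v ⊗ a')`. -/
def ract (χ : V ⊗[k] A →ₗ[k] A ⊗[k] V) (a' : A) : A ⊗[k] V →ₗ[k] A ⊗[k] V :=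
  smulMap (χ ∘ₗ (TensorProduct.mk k V A).flip a')

/-- `(A,V,χ)` is a twisted space:
`χ ∘ (id_V ⊗ μ_A) = (μ_A ⊗ id_V) ∘ (id_A ⊗ χ) ∘ (χ ⊗ id_A)` (stated on pure tensors). -/
def IsTwisting (χ : V ⊗[k] A →ₗ[k] A ⊗[k] V) : Prop :=
  ∀ (v : V) (a b : A), χ (v ⊗ₜ[k] (a * b)) = ract χ b (χ (v ⊗ₜ[k] a))

/-- `∇_χ(x) := x · 1_A`. -/
def nabla (χ : V ⊗[k] A →ₗ[k] A ⊗[k] V) : A ⊗[k] V →ₗ[k] A ⊗[k] V :=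
  ract χ 1

/-- `A × V := ∇_χ(A ⊗ V)`. -/
def AxV (χ : V ⊗[k] A →ₗ[k] A ⊗[k] V) : Submodule k (A ⊗[k] V) :=
  LinearMap.range (nabla χ)

/-- `X_χ := {x ∈ A ⊗ V : x · 1_A = 0}`. -/
def Xchi (χ : V ⊗[k] A →ₗ[k] A ⊗[k] V) : Submodule k (A ⊗[k] V) :=
  LinearMap.ker (nabla χ)

/-- `μ_𝓔 := (μ_A ⊗ id_V) ∘ (μ_A ⊗ F) ∘ (id_A ⊗ χ ⊗ id_V)`. -/
def muE (χ : V ⊗[k] A →ₗ[k] A ⊗[k] V) (F : V ⊗[k] V →ₗ[k] A ⊗[k] V) :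
    (A ⊗[k] V) ⊗[k] (A ⊗[k] V) →ₗ[k] A ⊗[k] V :=
  actMap ∘ₗ
  LinearMap.lTensor A (actMap) ∘ₗ
  LinearMap.lTensor A (LinearMap.lTensor A F ∘ₗ (TensorProduct.assoc k A V V).toLinearMap) ∘ₗ
  LinearMap.lTensor A (LinearMap.rTensor V χ) ∘ₗ
  LinearMap.lTensor A (TensorProduct.assoc k V A V).symm.toLinearMap ∘ₗ
  (TensorProduct.assoc k A V (A ⊗[k] V)).toLinearMap

/-- The twisted module condition (stated on pure tensors). -/
def TwistedModuleCond (χ : V ⊗[k] A →ₗ[k] A ⊗[k] V) (F : V ⊗[k] V →ₗ[k] A ⊗[k] V) : Prop :=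
  ∀ (v w : V) (a : A),
    ract χ a (F (v ⊗ₜ[k] w)) = muE χ F (((1 : A) ⊗ₜ[k] v) ⊗ₜ[k] χ (w ⊗ₜ[k] a))

/-- The cocycle condition (stated on pure tensors). -/
def CocycleCond (χ : V ⊗[k] A →ₗ[k] A ⊗[k] V) (F : V ⊗[k] V →ₗ[k] A ⊗[k] V) : Prop :=
  ∀ (v w u : V),
    smulMap (F ∘ₗ (TensorProduct.mk k V V).flip u) (F (v ⊗ₜ[k] w)) =
      muE χ F (((1 : A) ⊗ₜ[k] v) ⊗ₜ[k] F (w ⊗ₜ[k] u))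

/-- Preunit condition (i). -/
def Preunit1 (χ : V ⊗[k] A →ₗ[k] A ⊗[k] V) (F : V ⊗[k] V →ₗ[k] A ⊗[k] V)
    (ν : A ⊗[k] V) : Prop :=
  ∀ v : V, muE χ F (((1 : A) ⊗ₜ[k] v) ⊗ₜ[k] ν) = nabla χ ((1 : A) ⊗ₜ[k] v)

/-- Preunit condition (ii). -/
def Preunit2 (χ : V ⊗[k] A →ₗ[k] A ⊗[k] V) (F : V ⊗[k] V →ₗ[k] A ⊗[k] V)
    (ν : A ⊗[k] V) : Prop :=
  ∀ v : V, smulMap (F ∘ₗ (TensorProduct.mk k V V).flip v) ν = nabla χ ((1 : A) ⊗ₜ[k] v)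

/-- Preunit condition (iii). -/
def Preunit3 (χ : V ⊗[k] A →ₗ[k] A ⊗[k] V) (ν : A ⊗[k] V) : Prop :=
  ∀ a : A, ract χ a ν = a • ν

/-- `γ(v) := ∇_χ(1_A ⊗ v)`. -/
def gammaMap (χ : V ⊗[k] A →ₗ[k] A ⊗[k] V) : V → A ⊗[k] V :=
  fun v => nabla χ ((1 : A) ⊗ₜ[k] v)

/-- `j'_ν(a) := a · ν(1)`. -/
def jnu' (ν : A ⊗[k] V) : A → A ⊗[k] V := fun a => a • ν

/-- `j_ν(a) := ∇_χ(j'_ν(a))`. -/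
def jnu (χ : V ⊗[k] A →ₗ[k] A ⊗[k] V) (ν : A ⊗[k] V) : A → A ⊗[k] V :=
  fun a => nabla χ (a • ν)

section Aux

variable (χ : V ⊗[k] A →ₗ[k] A ⊗[k] V) (F : V ⊗[k] V →ₗ[k] A ⊗[k] V)

@[simp] lemma actMap_tmul (a : A) (x : A ⊗[k] V) :
    actMap (a ⊗ₜ[k] x) = a • x := by
  simp [actMap]

@[simp] lemma smulMap_tmul (g : V →ₗ[k] A ⊗[k] V) (a : A) (u : V) :
    smulMap g (a ⊗ₜ[k] u) = a • g u := by
  simp [smulMap]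

lemma smulMap_smul (g : V →ₗ[k] A ⊗[k] V) (a : A) (x : A ⊗[k] V) :
    smulMap g (a • x) = a • smulMap g x := by
  induction x using TensorProduct.induction_on with
  | zero => simp
  | tmul b u => rw [smul_tmul', smulMap_tmul, smulMap_tmul, smul_eq_mul, mul_smul]
  | add x y hx hy => rw [smul_add, map_add, map_add, hx, hy, smul_add]

lemma smulMap_add_g (g g' : V →ₗ[k] A ⊗[k] V) (x : A ⊗[k] V) :
    smulMap (g + g') x = smulMap g x + smulMap g' x := by
  induction x using TensorProduct.induction_on with
  | zero => simp
  | tmul a u => simp [smul_add]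
  | add x y hx hy =>
      rw [map_add, map_add, map_add, hx, hy]; abel

lemma smulMap_zero_g (x : A ⊗[k] V) :
    smulMap (0 : V →ₗ[k] A ⊗[k] V) x = 0 := by
  induction x using TensorProduct.induction_on with
  | zero => simp
  | tmul a u => simp
  | add x y hx hy => rw [map_add, hx, hy, add_zero]

lemma smulMap_comp (h g : V →ₗ[k] A ⊗[k] V) (x : A ⊗[k] V) :
    smulMap (smulMap h ∘ₗ g) x = smulMap h (smulMap g x) := by
  induction x using TensorProduct.induction_on with
  | zero => simp
  | tmul a u => simp [smulMap_smul]
  | add x y hx hy => rw [map_add, map_add, hx, hy, map_add]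

lemma ract_tmul (a' a : A) (v : V) :
    ract χ a' (a ⊗ₜ[k] v) = a • χ (v ⊗ₜ[k] a') := by
  simp [ract]

lemma ract_smul (a' a : A) (x : A ⊗[k] V) :
    ract χ a' (a • x) = a • ract χ a' x :=
  smulMap_smul _ a x

lemma ract_ract (hχ : IsTwisting χ) (a b : A) (x : A ⊗[k] V) :
    ract χ b (ract χ a x) = ract χ (a * b) x := by
  induction x using TensorProduct.induction_on with
  | zero => simp
  | tmul c v => rw [ract_tmul, ract_smul, ract_tmul, ← hχ]
  | add x y hx hy => rw [map_add, map_add, map_add, hx, hy]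

lemma nabla_tmul (a : A) (v : V) :
    nabla χ (a ⊗ₜ[k] v) = a • χ (v ⊗ₜ[k] 1) :=
  ract_tmul χ 1 a v

lemma nabla_smul (a : A) (x : A ⊗[k] V) :
    nabla χ (a • x) = a • nabla χ x :=
  smulMap_smul _ a x

lemma nabla_ract (hχ : IsTwisting χ) (a : A) (x : A ⊗[k] V) :
    nabla χ (ract χ a x) = ract χ a x := by
  show ract χ 1 (ract χ a x) = ract χ a x
  rw [ract_ract χ hχ, mul_one]

lemma nabla_idem (hχ : IsTwisting χ) (x : A ⊗[k] V) :
    nabla χ (nabla χ x) = nabla χ x :=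
  nabla_ract χ hχ 1 x

lemma AxV_nabla_eq (hχ : IsTwisting χ) {x : A ⊗[k] V} (hx : x ∈ AxV χ) :
    nabla χ x = x := by
  obtain ⟨y, rfl⟩ := hx
  exact nabla_idem χ hχ y

lemma smul_mem_AxV (a : A) {x : A ⊗[k] V} (hx : x ∈ AxV χ) :
    a • x ∈ AxV χ := by
  obtain ⟨y, rfl⟩ := hx
  exact ⟨a • y, nabla_smul χ a y⟩

lemma smulMap_mem_AxV (g : V →ₗ[k] A ⊗[k] V) (hg : ∀ v, g v ∈ AxV χ)
    (x : A ⊗[k] V) : smulMap g x ∈ AxV χ := by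
  induction x using TensorProduct.induction_on with
  | zero => simpa using (AxV χ).zero_mem
  | tmul a u => rw [smulMap_tmul]; exact smul_mem_AxV χ a (hg u)
  | add x y hx hy => rw [map_add]; exact (AxV χ).add_mem hx hy

lemma aux1 (w : V) (x : A ⊗[k] V) :
    actMap ((LinearMap.lTensor A F) ((TensorProduct.assoc k A V V) (x ⊗ₜ[k] w))) =
      smulMap (F ∘ₗ (TensorProduct.mk k V V).flip w) x := by
  induction x using TensorProduct.induction_on with
  | zero => simp
  | tmul c v' => simp
  | add x y hx hy => rw [add_tmul, map_add, map_add, map_add, hx, hy, map_add]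

lemma muE_tmul_tmul (a : A) (v : V) (b : A) (w : V) :
    muE χ F ((a ⊗ₜ[k] v) ⊗ₜ[k] (b ⊗ₜ[k] w)) =
      a • smulMap (F ∘ₗ (TensorProduct.mk k V V).flip w) (χ (v ⊗ₜ[k] b)) := by
  simp only [muE, LinearMap.comp_apply, LinearEquiv.coe_coe, TensorProduct.assoc_tmul,
    LinearMap.lTensor_tmul, TensorProduct.assoc_symm_tmul, LinearMap.rTensor_tmul,
    actMap_tmul]
  rw [aux1]

lemma muE_tmul_left (a : A) (v : V) (y : (A ⊗[k] V)) :
    muE χ F ((a ⊗ₜ[k] v) ⊗ₜ[k] y) = a • muE χ F (((1 : A) ⊗ₜ[k] v) ⊗ₜ[k] y) := by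
  simp only [muE, LinearMap.comp_apply, LinearEquiv.coe_coe, TensorProduct.assoc_tmul,
    LinearMap.lTensor_tmul, actMap_tmul, one_smul]

lemma muE_smul_left (a : A) (x y : A ⊗[k] V) :
    muE χ F ((a • x) ⊗ₜ[k] y) = a • muE χ F (x ⊗ₜ[k] y) := by
  induction x using TensorProduct.induction_on with
  | zero => rw [smul_zero, TensorProduct.zero_tmul, map_zero, smul_zero]
  | tmul b v =>
      rw [smul_tmul', smul_eq_mul, muE_tmul_left, muE_tmul_left χ F b, mul_smul]
  | add x y hx hy =>
      rw [smul_add, TensorProduct.add_tmul, TensorProduct.add_tmul, map_add, map_add,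
        hx, hy, smul_add]

/-- `mm χ F y : v ↦ μ_𝓔((1 ⊗ v) ⊗ y)` as a linear map. -/
def mm (y : A ⊗[k] V) : V →ₗ[k] A ⊗[k] V :=
  muE χ F ∘ₗ (TensorProduct.mk k (A ⊗[k] V) (A ⊗[k] V)).flip y ∘ₗ
    TensorProduct.mk k A V 1

@[simp] lemma mm_apply (y : A ⊗[k] V) (v : V) :
    mm χ F y v = muE χ F (((1 : A) ⊗ₜ[k] v) ⊗ₜ[k] y) := rfl

lemma mm_add (y y' : A ⊗[k] V) : mm χ F (y + y') = mm χ F y + mm χ F y' := by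
  ext v
  simp [TensorProduct.tmul_add]

lemma mm_zero : mm χ F (0 : A ⊗[k] V) = 0 := by
  ext v
  simp

lemma mm_tmul (b : A) (w : V) (v : V) :
    mm χ F (b ⊗ₜ[k] w) v =
      smulMap (F ∘ₗ (TensorProduct.mk k V V).flip w) (χ (v ⊗ₜ[k] b)) := by
  rw [mm_apply, muE_tmul_tmul, one_smul]

lemma lemE (b : A) (w : V) (x : A ⊗[k] V) :
    smulMap (mm χ F (b ⊗ₜ[k] w)) x =
      smulMap (F ∘ₗ (TensorProduct.mk k V V).flip w) (ract χ b x) := by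
  induction x using TensorProduct.induction_on with
  | zero => simp
  | tmul c v' =>
      rw [smulMap_tmul, mm_tmul, ract_tmul, smulMap_smul]
  | add x y hx hy => rw [map_add, map_add, map_add, hx, hy]

lemma muE_left (b : A) (w : V) (y : A ⊗[k] V) :
    muE χ F (y ⊗ₜ[k] (b ⊗ₜ[k] w)) = smulMap (mm χ F (b ⊗ₜ[k] w)) y := by
  induction y using TensorProduct.induction_on with
  | zero => rw [TensorProduct.zero_tmul, map_zero, map_zero]
  | tmul a v => rw [muE_tmul_tmul, smulMap_tmul, mm_tmul]
  | add x y hx hy =>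
      rw [TensorProduct.add_tmul, map_add, map_add, hx, hy]

lemma lemC (hχ : IsTwisting χ) (v : V) (e : A) (y : A ⊗[k] V) :
    muE χ F (((1 : A) ⊗ₜ[k] v) ⊗ₜ[k] (e • y)) = smulMap (mm χ F y) (χ (v ⊗ₜ[k] e)) := by
  induction y using TensorProduct.induction_on with
  | zero => rw [smul_zero, TensorProduct.tmul_zero, map_zero, mm_zero, smulMap_zero_g]
  | tmul d t =>
      rw [smul_tmul', smul_eq_mul, muE_tmul_tmul, one_smul, hχ, ← lemE]
  | add y y' hy hy' =>
      rw [smul_add, TensorProduct.tmul_add, map_add, hy, hy', mm_add, smulMap_add_g]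

lemma lemComm (hχ : IsTwisting χ) (hcoc : CocycleCond χ F) (p u : V) (x : A ⊗[k] V) :
    muE χ F (((1 : A) ⊗ₜ[k] p) ⊗ₜ[k]
        smulMap (F ∘ₗ (TensorProduct.mk k V V).flip u) x) =
      smulMap (F ∘ₗ (TensorProduct.mk k V V).flip u)
        (muE χ F (((1 : A) ⊗ₜ[k] p) ⊗ₜ[k] x)) := by
  induction x using TensorProduct.induction_on with
  | zero => simp
  | tmul e t =>
      have h1 : smulMap (F ∘ₗ (TensorProduct.mk k V V).flip u) (e ⊗ₜ[k] t) =
          e • F (t ⊗ₜ[k] u) := by simp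
      have h2 : mm χ F (F (t ⊗ₜ[k] u)) =
          smulMap (F ∘ₗ (TensorProduct.mk k V V).flip u) ∘ₗ
            (F ∘ₗ (TensorProduct.mk k V V).flip t) := by
        ext p'
        simp only [mm_apply, LinearMap.comp_apply, LinearMap.flip_apply,
          TensorProduct.mk_apply]
        exact (hcoc p' t u).symm
      rw [h1, lemC χ F hχ, h2, smulMap_comp, muE_tmul_tmul, one_smul]
  | add x y hx hy =>
      rw [map_add, TensorProduct.tmul_add, map_add, hx, hy, TensorProduct.tmul_add,
        map_add, map_add]

lemma keyPQ (hχ : IsTwisting χ) (htm : TwistedModuleCond χ F) (hcoc : CocycleCond χ F)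
    (p q : V) (c : A) (u : V) :
    muE χ F (F (p ⊗ₜ[k] q) ⊗ₜ[k] (c ⊗ₜ[k] u)) =
      muE χ F (((1 : A) ⊗ₜ[k] p) ⊗ₜ[k]
        muE χ F (((1 : A) ⊗ₜ[k] q) ⊗ₜ[k] (c ⊗ₜ[k] u))) := by
  rw [muE_left, lemE, htm p q c, muE_tmul_tmul, one_smul, lemComm χ F hχ hcoc]

lemma assocKey (hχ : IsTwisting χ) (htm : TwistedModuleCond χ F)
    (hcoc : CocycleCond χ F) (v : V) (y z : A ⊗[k] V) :
    muE χ F (muE χ F (((1 : A) ⊗ₜ[k] v) ⊗ₜ[k] y) ⊗ₜ[k] z) =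
      muE χ F (((1 : A) ⊗ₜ[k] v) ⊗ₜ[k] muE χ F (y ⊗ₜ[k] z)) := by
  induction y using TensorProduct.induction_on with
  | zero => simp
  | tmul b w =>
      induction z using TensorProduct.induction_on with
      | zero => simp
      | tmul c u =>
          have sub : ∀ x : A ⊗[k] V,
              muE χ F (smulMap (F ∘ₗ (TensorProduct.mk k V V).flip w) x ⊗ₜ[k]
                  (c ⊗ₜ[k] u)) =
                smulMap (mm χ F (muE χ F (((1 : A) ⊗ₜ[k] w) ⊗ₜ[k] (c ⊗ₜ[k] u)))) x := by
            intro x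
            induction x using TensorProduct.induction_on with
            | zero => rw [map_zero, TensorProduct.zero_tmul, map_zero, map_zero]
            | tmul a v' =>
                rw [smulMap_tmul, LinearMap.comp_apply, LinearMap.flip_apply,
                  TensorProduct.mk_apply, muE_smul_left,
                  keyPQ χ F hχ htm hcoc, smulMap_tmul, mm_apply]
            | add x y hx hy =>
                rw [map_add, TensorProduct.add_tmul, map_add, hx, hy, map_add]
          rw [muE_tmul_tmul, one_smul, sub, muE_tmul_left χ F b w (c ⊗ₜ[k] u), lemC χ F hχ]
      | add z z' hz hz' =>
          rw [TensorProduct.tmul_add, map_add, TensorProduct.tmul_add, map_add, hz, hz',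
            TensorProduct.tmul_add, map_add]
  | add y y' hy hy' =>
      rw [TensorProduct.tmul_add, map_add, TensorProduct.add_tmul, map_add, hy, hy',
        TensorProduct.add_tmul, map_add, TensorProduct.tmul_add, map_add]

lemma muE_assoc (hχ : IsTwisting χ) (htm : TwistedModuleCond χ F)
    (hcoc : CocycleCond χ F) (x y z : A ⊗[k] V) :
    muE χ F (muE χ F (x ⊗ₜ[k] y) ⊗ₜ[k] z) =
      muE χ F (x ⊗ₜ[k] muE χ F (y ⊗ₜ[k] z)) := by
  induction x using TensorProduct.induction_on with
  | zero =>
      rw [TensorProduct.zero_tmul, map_zero, TensorProduct.zero_tmul, map_zero,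
        TensorProduct.zero_tmul, map_zero]
  | tmul a v =>
      rw [muE_tmul_left, muE_smul_left, muE_tmul_left χ F a v (muE χ F (y ⊗ₜ[k] z)),
        assocKey χ F hχ htm hcoc]
  | add x x' hx hx' =>
      rw [TensorProduct.add_tmul, map_add, TensorProduct.add_tmul, map_add, hx, hx',
        TensorProduct.add_tmul, map_add]

lemma muE_mem_AxV (hχ : IsTwisting χ) (hF : ∀ x : V ⊗[k] V, F x ∈ AxV χ)
    (x y : A ⊗[k] V) : muE χ F (x ⊗ₜ[k] y) ∈ AxV χ := by
  induction y using TensorProduct.induction_on with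
  | zero => rw [TensorProduct.tmul_zero, map_zero]; exact (AxV χ).zero_mem
  | tmul b w =>
      rw [muE_left]
      refine smulMap_mem_AxV χ _ (fun v => ?_) x
      rw [mm_tmul]
      exact smulMap_mem_AxV χ _ (fun v' => hF _) _
  | add y y' h1 h2 =>
      rw [TensorProduct.tmul_add, map_add]; exact (AxV χ).add_mem h1 h2

lemma muE_nu_right (ν : A ⊗[k] V) (hν1 : Preunit1 χ F ν) (x : A ⊗[k] V) :
    muE χ F (x ⊗ₜ[k] ν) = nabla χ x := by
  induction x using TensorProduct.induction_on with
  | zero => rw [TensorProduct.zero_tmul, map_zero, map_zero]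
  | tmul a v =>
      rw [muE_tmul_left, hν1 v, nabla_tmul, nabla_tmul, one_smul]
  | add x y hx hy =>
      rw [TensorProduct.add_tmul, map_add, hx, hy, map_add]

lemma muE_nu_left (hχ : IsTwisting χ) (ν : A ⊗[k] V) (hν2 : Preunit2 χ F ν)
    (hν3 : Preunit3 χ ν) (x : A ⊗[k] V) :
    muE χ F (ν ⊗ₜ[k] x) = nabla χ x := by
  induction x using TensorProduct.induction_on with
  | zero => rw [TensorProduct.tmul_zero, map_zero, map_zero]
  | tmul b w =>
      rw [muE_left, lemE, hν3 b, smulMap_smul, hν2 w, nabla_tmul, nabla_tmul, one_smul]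
  | add x y hx hy =>
      rw [TensorProduct.tmul_add, map_add, hx, hy, map_add]

lemma mm_ract (hχ : IsTwisting χ) (htm : TwistedModuleCond χ F) (v : V) (a : A)
    (y : A ⊗[k] V) :
    muE χ F (((1 : A) ⊗ₜ[k] v) ⊗ₜ[k] ract χ a y) =
      ract χ a (muE χ F (((1 : A) ⊗ₜ[k] v) ⊗ₜ[k] y)) := by
  induction y using TensorProduct.induction_on with
  | zero => rw [map_zero, TensorProduct.tmul_zero, map_zero, map_zero]
  | tmul b w =>
      have h2 : mm χ F (χ (w ⊗ₜ[k] a)) =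
          smulMap (χ ∘ₗ (TensorProduct.mk k V A).flip a) ∘ₗ
            (F ∘ₗ (TensorProduct.mk k V V).flip w) := by
        ext v'
        simp only [mm_apply, LinearMap.comp_apply, LinearMap.flip_apply,
          TensorProduct.mk_apply]
        exact (htm v' w a).symm
      rw [ract_tmul, lemC χ F hχ, h2, smulMap_comp, muE_tmul_tmul, one_smul]
      rfl
  | add y y' hy hy' =>
      rw [map_add, TensorProduct.tmul_add, map_add, hy, hy', TensorProduct.tmul_add,
        map_add, map_add]

lemma muE_ract (hχ : IsTwisting χ) (htm : TwistedModuleCond χ F) (a : A)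
    (x y : A ⊗[k] V) :
    muE χ F (x ⊗ₜ[k] ract χ a y) = ract χ a (muE χ F (x ⊗ₜ[k] y)) := by
  induction x using TensorProduct.induction_on with
  | zero => rw [TensorProduct.zero_tmul, map_zero, TensorProduct.zero_tmul, map_zero,
      map_zero]
  | tmul a' v =>
      rw [muE_tmul_left, mm_ract χ F hχ htm, muE_tmul_left χ F a' v y, ract_smul]
  | add x x' hx hx' =>
      rw [TensorProduct.add_tmul, map_add, TensorProduct.add_tmul, map_add, hx, hx',
        map_add]

end Aux

theorem statement_6 (χ : V ⊗[k] A →ₗ[k] A ⊗[k] V) (F : V ⊗[k] V →ₗ[k] A ⊗[k] V)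
    (ν : A ⊗[k] V)
    (hχ : IsTwisting χ) (hF : ∀ x : V ⊗[k] V, F x ∈ AxV χ)
    (hν1 : Preunit1 χ F ν) (hν2 : Preunit2 χ F ν) (hν3 : Preunit3 χ ν)
    (htm : TwistedModuleCond χ F) (hcoc : CocycleCond χ F) :
    (∀ x y : A ⊗[k] V, x ∈ AxV χ → y ∈ AxV χ → muE χ F (x ⊗ₜ[k] y) ∈ AxV χ) ∧
    ν ∈ AxV χ ∧
    (∀ x ∈ AxV χ, muE χ F (ν ⊗ₜ[k] x) = x ∧ muE χ F (x ⊗ₜ[k] ν) = x) ∧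
    (∀ x y z : A ⊗[k] V, x ∈ AxV χ → y ∈ AxV χ → z ∈ AxV χ →
      muE χ F (muE χ F (x ⊗ₜ[k] y) ⊗ₜ[k] z) = muE χ F (x ⊗ₜ[k] muE χ F (y ⊗ₜ[k] z))) ∧
    (∀ (a : A) (x y : A ⊗[k] V), x ∈ AxV χ → y ∈ AxV χ →
      muE χ F ((a • x) ⊗ₜ[k] y) = a • muE χ F (x ⊗ₜ[k] y) ∧
      muE χ F (x ⊗ₜ[k] ract χ a y) = ract χ a (muE χ F (x ⊗ₜ[k] y))) := by
  have hnumem : ν ∈ AxV χ := ⟨ν, by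
    show ract χ 1 ν = ν
    rw [hν3 1, one_smul]⟩
  refine ⟨fun x y _ _ => muE_mem_AxV χ F hχ hF x y, hnumem, ?_, ?_, ?_⟩
  · intro x hx
    exact ⟨by rw [muE_nu_left χ F hχ ν hν2 hν3, AxV_nabla_eq χ hχ hx],
           by rw [muE_nu_right χ F ν hν1, AxV_nabla_eq χ hχ hx]⟩
  · intro x y z _ _ _
    exact muE_assoc χ F hχ htm hcoc x y z
  · intro a x y _ _
    exact ⟨muE_smul_left χ F a x y, muE_ract χ F hχ htm a x y⟩


end WeakCrossedProduct
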